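/- Let n ∈ ℝ³ be a unit vector and β ∈ ℝ³. With 𝒩 := [[0_{3,3}, −V_n],[V_n, (β·n) I₃]] and ℳ_N := [[0_{3,3}, −V_n],[−V_n, |β·n| I₃]], the following hold: (i) (ℳ_N z, z) = |β·n| ‖p‖² ≥ 0 for all z = (b, p) ∈ ℝ⁶ (so ℳ_N is monotone); (ii) Ker(ℳ_N − 𝒩) + Ker(ℳ_N + 𝒩) = ℝ⁶. -/

import Mathlib

/-!
In both matrices the off-diagonal blocks couple `b` and `p` through the antisymmetric `V_n`, so
these contributions cancel in the quadratic form of `ℳ_N`, leaving `|β·n| ‖p‖²`.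
For the kernels, `ℳ_N ∓ 𝒩` are block triangular. If `β·n ≥ 0`, `(0, p)` and `(b, 0)` lie in the
two kernels. If `β·n < 0`, `ℳ_N + 𝒩` kills every `(b, t n)`, while `ℳ_N - 𝒩` kills `(b₁, q)`
whenever `n × b₁ = -(β·n) q`; for `q = p - (p·n) n` take `b₁ = (β·n) n × p`, since
`n × (n × p) = (n·p) n - p` for a unit vector `n`.
-/

open Matrix

/-- The cross-product matrix `V_α`, characterized by `V_α s = α × s`. -/
def crossMat (α : Fin 3 → ℝ) : Matrix (Fin 3) (Fin 3) ℝ :=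
  !![0, -α 2, α 1; α 2, 0, -α 0; -α 1, α 0, 0]

open LinearMap

section Blocks

variable {m n R : Type*} [Fintype m] [Fintype n] [CommRing R]

theorem fromBlocks_mulVec_sumElim (A : Matrix m m R) (B : Matrix m n R) (C : Matrix n m R)
    (D : Matrix n n R) (b : m → R) (p : n → R) :
    fromBlocks A B C D *ᵥ Sum.elim b p = Sum.elim (A *ᵥ b + B *ᵥ p) (C *ᵥ b + D *ᵥ p) :=
  fromBlocks_mulVec A B C D _

theorem fromBlocks_zero_mulVec_dotProduct_self {B : Matrix m n R} {C : Matrix n m R}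
    (hCB : Cᵀ = -B) (D : Matrix n n R) (b : m → R) (p : n → R) :
    fromBlocks 0 B C D *ᵥ Sum.elim b p ⬝ᵥ Sum.elim b p = D *ᵥ p ⬝ᵥ p := by
  have hskew : C *ᵥ b ⬝ᵥ p = -(B *ᵥ p ⬝ᵥ b) := by
    rw [dotProduct_comm, dotProduct_mulVec, ← mulVec_transpose, hCB, neg_mulVec, neg_dotProduct]
  rw [fromBlocks_mulVec_sumElim, zero_mulVec, zero_add, sumElim_dotProduct_sumElim,
    add_dotProduct, hskew, add_neg_cancel_left]

omit [Fintype m] in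
theorem mem_ker_sub_mulVecLin_iff {M N : Matrix m n R} {z : n → R} :
    z ∈ ker (M - N).mulVecLin ↔ M *ᵥ z = N *ᵥ z := by
  rw [mem_ker, mulVecLin_apply, sub_mulVec, sub_eq_zero]

omit [Fintype m] in
theorem mem_ker_add_mulVecLin_iff {M N : Matrix m n R} {z : n → R} :
    z ∈ ker (M + N).mulVecLin ↔ M *ᵥ z = -(N *ᵥ z) := by
  rw [mem_ker, mulVecLin_apply, add_mulVec, add_eq_zero_iff_eq_neg]

end Blocks

theorem crossMat_mulVec (α s : Fin 3 → ℝ) : crossMat α *ᵥ s = α ⨯₃ s := by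
  ext i
  fin_cases i <;> simp [crossMat, cross_apply, mulVec, dotProduct, Fin.sum_univ_three] <;> ring

theorem crossMat_transpose (α : Fin 3 → ℝ) : (crossMat α)ᵀ = -crossMat α := by
  ext i j
  fin_cases i <;> fin_cases j <;> simp [crossMat]

/-- The paper's `𝒩`, with `c = β·n`. -/
def neumannN (n : Fin 3 → ℝ) (c : ℝ) : Matrix (Fin 3 ⊕ Fin 3) (Fin 3 ⊕ Fin 3) ℝ :=
  fromBlocks 0 (-crossMat n) (crossMat n) (c • 1)

/-- The paper's `ℳ_N`, with `c = β·n`. -/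
def neumannM (n : Fin 3 → ℝ) (c : ℝ) : Matrix (Fin 3 ⊕ Fin 3) (Fin 3 ⊕ Fin 3) ℝ :=
  fromBlocks 0 (-crossMat n) (-crossMat n) (|c| • 1)

section Neumann

variable (n : Fin 3 → ℝ) (c : ℝ) (b p : Fin 3 → ℝ)

theorem neumannN_mulVec :
    neumannN n c *ᵥ Sum.elim b p = Sum.elim (-(n ⨯₃ p)) (n ⨯₃ b + c • p) := by
  simp only [neumannN, fromBlocks_mulVec_sumElim, zero_mulVec, zero_add, neg_mulVec,
    crossMat_mulVec, smul_mulVec, one_mulVec]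

theorem neumannM_mulVec :
    neumannM n c *ᵥ Sum.elim b p = Sum.elim (-(n ⨯₃ p)) (-(n ⨯₃ b) + |c| • p) := by
  simp only [neumannM, fromBlocks_mulVec_sumElim, zero_mulVec, zero_add, neg_mulVec,
    crossMat_mulVec, smul_mulVec, one_mulVec]

theorem neumannM_mulVec_dotProduct_self :
    neumannM n c *ᵥ Sum.elim b p ⬝ᵥ Sum.elim b p = |c| * ∑ i, p i ^ 2 := by
  rw [neumannM, fromBlocks_zero_mulVec_dotProduct_self (by rw [transpose_neg, crossMat_transpose])]
  simp [smul_mulVec, one_mulVec, dotProduct, sq, Finset.mul_sum, mul_assoc]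

theorem neumann_ker_sup_ker_eq_top (hn : n ⬝ᵥ n = 1) :
    ker (neumannM n c - neumannN n c).mulVecLin ⊔ ker (neumannM n c + neumannN n c).mulVecLin
      = ⊤ := by
  refine eq_top_iff.2 fun z _ => ?_
  rw [← Sum.elim_comp_inl_inr z]
  set b := z ∘ Sum.inl
  set p := z ∘ Sum.inr
  rcases le_or_gt 0 c with hc | hc
  · rw [← zero_add b, ← add_zero p, Sum.elim_add_add]
    refine Submodule.add_mem_sup ?_ ?_
    · rw [mem_ker_sub_mulVecLin_iff, neumannM_mulVec, neumannN_mulVec, abs_of_nonneg hc]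
      simp only [map_zero, neg_zero, zero_add]
    · rw [mem_ker_add_mulVecLin_iff, neumannM_mulVec, neumannN_mulVec, ← Sum.elim_neg_neg]
      simp only [map_zero, neg_zero, smul_zero, add_zero]
  · set b₁ := c • n ⨯₃ p
    set p₂ := (p ⬝ᵥ n) • n
    have hb₁ : n ⨯₃ b₁ = -(c • (p - p₂)) := by
      simp only [b₁, p₂, map_smul, cross_cross_eq_smul_sub_smul', hn, one_smul,
        dotProduct_comm n p]
      module
    rw [← add_sub_cancel b₁ b, ← sub_add_cancel p p₂, Sum.elim_add_add]
    refine Submodule.add_mem_sup ?_ ?_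
    · rw [mem_ker_sub_mulVecLin_iff, neumannM_mulVec, neumannN_mulVec, abs_of_neg hc, hb₁]
      congr 1
      module
    · rw [mem_ker_add_mulVecLin_iff, neumannM_mulVec, neumannN_mulVec, ← Sum.elim_neg_neg]
      simp only [p₂, map_smul, cross_self, smul_zero, neg_zero]
      congr 1
      rw [abs_of_neg hc]
      module

end Neumann

/-- Neumann boundary matrices of the Friedrichs form of the vector
diffusion–advection–reaction problem: with `𝒩 = [[0, −V_n],[V_n, (β·n) I₃]]` and
`ℳ_N = [[0, −V_n],[−V_n, |β·n| I₃]]` for a unit vector `n`: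
(i) `(ℳ_N z, z) = |β·n| ‖p‖² ≥ 0` for all `z = (b, p)`;
(ii) `Ker(ℳ_N − 𝒩) + Ker(ℳ_N + 𝒩) = ℝ⁶`. -/
theorem stmt15 (n β : Fin 3 → ℝ) (hn : ∑ i, n i ^ 2 = 1) :
    let N : Matrix (Fin 3 ⊕ Fin 3) (Fin 3 ⊕ Fin 3) ℝ :=
      Matrix.fromBlocks 0 (-crossMat n) (crossMat n) ((β ⬝ᵥ n) • 1)
    let MN : Matrix (Fin 3 ⊕ Fin 3) (Fin 3 ⊕ Fin 3) ℝ :=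
      Matrix.fromBlocks 0 (-crossMat n) (-crossMat n) (|β ⬝ᵥ n| • 1)
    (∀ z : Fin 3 ⊕ Fin 3 → ℝ,
      MN.mulVec z ⬝ᵥ z = |β ⬝ᵥ n| * ∑ i, z (Sum.inr i) ^ 2 ∧ 0 ≤ MN.mulVec z ⬝ᵥ z) ∧
    LinearMap.ker (MN - N).mulVecLin ⊔ LinearMap.ker (MN + N).mulVecLin = ⊤ := by
  intro N MN
  have hn' : n ⬝ᵥ n = 1 := by simpa only [dotProduct, sq] using hn
  refine ⟨fun z => ?_, neumann_ker_sup_ker_eq_top n _ hn'⟩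
  have hquad : MN *ᵥ z ⬝ᵥ z = |β ⬝ᵥ n| * ∑ i, z (Sum.inr i) ^ 2 := by
    rw [← Sum.elim_comp_inl_inr z]
    exact neumannM_mulVec_dotProduct_self n _ _ _
  exact ⟨hquad, hquad ▸ by positivity⟩
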